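/- For any integers m ≥ 1 and n ≥ 1, the sum over all complete (m+1)-ary trees T with n internal vertices of the product over all internal vertices v of T of (x + 1/h_v) equals ((x+1)/n!) · ∏_{i=1}^{n-1} ((mn+i+1)(x+1) − (m+1)i), as an identity of polynomials in x over ℚ, where h_v denotes the number of internal vertices of the subtree of T rooted at v. -/

import Mathlib

open Polynomial Finset

/-- A complete `m`-ary tree: a `leaf` is an external vertex and a `node`
has exactly `m` linearly ordered subtrees. -/
inductive MTree (m : ℕ) : Type
  | leaf : MTree m
  | node : (Fin m → MTree m) → MTree m

namespace MTree

/-- The number of internal vertices of a complete `m`-ary tree. -/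
def internals {m : ℕ} : MTree m → ℕ
  | leaf => 0
  | node c => 1 + ∑ i, (c i).internals

/-- The first kind of hook length of the root of `node c`: one plus the number of
internal vertices of all subtrees except the rightmost one. -/
def hook1 {m : ℕ} (c : Fin m → MTree m) : ℕ :=
  1 + ∑ i ∈ Finset.univ.filter (fun i : Fin m => (i : ℕ) + 1 < m), (c i).internals

/-- The product of `f (𝓗_v)` over all internal vertices `v` of a complete `m`-ary
tree, where `𝓗_v` is the first kind of hook length. -/
def hookProd1 {m : ℕ} {R : Type*} [CommSemiring R] (f : ℕ → R) : MTree m → R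
  | leaf => 1
  | node c => f (hook1 c) * ∏ i, hookProd1 f (c i)

/-- The number of internal vertices of the `(m+1-|S|)`-ary tree `T^S` obtained from a
complete `(m+1)`-ary tree `T` by recursively deleting, for every `r ∈ S ⊆ [m]`,
the `r`-th subtree of every remaining internal vertex (the label `r ∈ {1,…,m}`
corresponds to the child with index `r - 1`, i.e. to `Fin.castSucc` of `Fin m`). -/
def internalsS {m : ℕ} (S : Finset (Fin m)) : MTree (m + 1) → ℕ
  | leaf => 0
  | node c => 1 + ∑ i ∈ (S.image Fin.castSucc)ᶜ, internalsS S (c i)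

/-- The product of `f (ℍ_v^S)` over all internal vertices `v` of a complete
`(m+1)`-ary tree, where `ℍ_v^S` is the second kind of hook length. -/
def hookProdS {m : ℕ} {R : Type*} [CommSemiring R] (S : Finset (Fin m)) (f : ℕ → R) :
    MTree (m + 1) → R
  | leaf => 1
  | node c => f (internalsS S (node c)) * ∏ i, hookProdS S f (c i)

end MTree

/-!
Write `u = x + 1`, `β = m - x` and `H_n(a) = a/n! ∏_{i=1}^{n-1} (a + n m u - i β)`, so that the
right-hand side is `H_n(u)`. Splitting a tree at its root gives the recursion
`P_{n+1} = (x + 1/(n+1)) ∑_{k_0+⋯+k_m=n} ∏ P_{k_i}` for the hook sums `P_n`. The `H_n` obey the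
Hagen–Rothe convolution `∑_{k+l=n} H_k(a) H_l(b) = H_n(a+b)`, so
`∑_{k_0+⋯+k_m=n} ∏ H_{k_i}(u) = H_n((m+1)u)`, and `(x + 1/(n+1)) H_n((m+1)u) = H_{n+1}(u)`:
the `H_n(u)` satisfy the same recursion as the `P_n`. The convolution holds because
`H_{n+1}(a + β) = H_{n+1}(a) + β H_n(a + m u)` makes the difference of its two sides a
`β`-periodic polynomial in `a`, which vanishes at `a = 0`. As both sides of the formula are
polynomials in `x`, it suffices to evaluate them at `x ≠ m`, where `β ≠ 0`.
-/

namespace MTree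

variable {m : ℕ}

theorem node_injective : Function.Injective (node : (Fin m → MTree m) → MTree m) :=
  fun _ _ => node.inj

theorem internals_node (c : Fin m → MTree m) : (node c).internals = 1 + ∑ i, (c i).internals :=
  rfl

theorem internals_lt_internals_node (c : Fin m → MTree m) (i : Fin m) :
    (c i).internals < (node c).internals :=
  Nat.lt_one_add_iff.mpr (single_le_sum (f := fun j => (c j).internals) (fun _ _ => Nat.zero_le _)
    (mem_univ i))

theorem finite_setOf_internals_le (n : ℕ) : {T : MTree m | T.internals ≤ n}.Finite := by
  induction n with
  | zero =>
    refine (Set.finite_singleton leaf).subset fun T hT => ?_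
    cases T with
    | leaf => rfl
    | node c => exact absurd hT (by simp [internals_node])
  | succ n ih =>
    refine ((Set.Finite.pi fun _ => ih).image node).insert leaf |>.subset fun T hT => ?_
    cases T with
    | leaf => exact Set.mem_insert _ _
    | node c =>
      refine Set.mem_insert_of_mem _ ⟨c, fun i _ => ?_, rfl⟩
      have := internals_lt_internals_node c i
      simp only [Set.mem_ofPred_eq] at hT ⊢
      omega

theorem finite_setOf_internals_eq (n : ℕ) : {T : MTree m | T.internals = n}.Finite :=
  (finite_setOf_internals_le n).subset fun _ => le_of_eq

noncomputable def withInternals (m n : ℕ) : Finset (MTree m) :=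
  (finite_setOf_internals_eq n).toFinset

@[simp]
theorem mem_withInternals {n : ℕ} {T : MTree m} : T ∈ withInternals m n ↔ T.internals = n :=
  Set.Finite.mem_toFinset _

theorem coe_withInternals (n : ℕ) :
    (withInternals m n : Set (MTree m)) = {T | T.internals = n} :=
  Set.Finite.coe_toFinset _

theorem withInternals_zero : withInternals m 0 = {leaf} := by
  ext T
  cases T with
  | leaf => simp [internals]
  | node c => simp [internals_node]

theorem pairwiseDisjoint_map_node_piFinset (n : ℕ) :
    (Nat.antidiagonalTuple m n : Set (Fin m → ℕ)).PairwiseDisjoint fun k =>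
      (Fintype.piFinset fun i => withInternals m (k i)).map ⟨node, node_injective⟩ := by
  intro k _ k' _ hne
  refine disjoint_left.mpr fun T hT hT' => hne ?_
  simp only [mem_map, Fintype.mem_piFinset, mem_withInternals, Function.Embedding.coeFn_mk]
    at hT hT'
  obtain ⟨c, hc, rfl⟩ := hT
  obtain ⟨c', hc', hcc'⟩ := hT'
  cases node_injective hcc'
  exact funext fun i => (hc i).symm.trans (hc' i)

theorem withInternals_succ [DecidableEq (MTree m)] (n : ℕ) :
    withInternals m (n + 1) = (Nat.antidiagonalTuple m n).biUnion fun k =>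
      (Fintype.piFinset fun i => withInternals m (k i)).map ⟨node, node_injective⟩ := by
  ext T
  simp only [mem_withInternals, mem_biUnion, mem_map, Fintype.mem_piFinset,
    Nat.mem_antidiagonalTuple, Function.Embedding.coeFn_mk]
  constructor
  · cases T with
    | leaf => simp [internals]
    | node c =>
      intro hT
      exact ⟨fun i => (c i).internals, by rw [internals_node] at hT; simp only; omega, c,
        fun _ => rfl, rfl⟩
  · rintro ⟨k, hk, c, hc, rfl⟩
    rw [internals_node, ← hk, sum_congr rfl fun i _ => hc i, add_comm]

theorem internalsS_empty (T : MTree (m + 1)) : T.internalsS ∅ = T.internals := by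
  induction T with
  | leaf => rfl
  | node c ih => simp [internalsS, internals, ih]

theorem hookProdS_empty_node {R : Type*} [CommSemiring R] (f : ℕ → R)
    (c : Fin (m + 1) → MTree (m + 1)) :
    (node c).hookProdS ∅ f = f (node c).internals * ∏ i, (c i).hookProdS ∅ f := by
  rw [hookProdS, internalsS_empty]

theorem map_hookProdS {R S : Type*} [CommSemiring R] [CommSemiring S] (φ : R →+* S)
    (s : Finset (Fin m)) (f : ℕ → R) (T : MTree (m + 1)) :
    φ (T.hookProdS s f) = T.hookProdS s (φ ∘ f) := by
  induction T with
  | leaf => simp [hookProdS]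
  | node c ih => simp [hookProdS, ih]

section HookSum

variable {R : Type*} [CommSemiring R]

noncomputable def hookSum (m : ℕ) (f : ℕ → R) (n : ℕ) : R :=
  ∑ T ∈ withInternals (m + 1) n, T.hookProdS (∅ : Finset (Fin m)) f

theorem hookSum_zero (m : ℕ) (f : ℕ → R) : hookSum m f 0 = 1 := by
  simp [hookSum, withInternals_zero, hookProdS]

theorem hookSum_succ (m : ℕ) (f : ℕ → R) (n : ℕ) :
    hookSum m f (n + 1) =
      f (n + 1) * ∑ k ∈ Nat.antidiagonalTuple (m + 1) n, ∏ i, hookSum m f (k i) := by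
  classical
  rw [hookSum, withInternals_succ, sum_biUnion (pairwiseDisjoint_map_node_piFinset n), mul_sum]
  refine sum_congr rfl fun k hk => ?_
  rw [sum_map]
  unfold hookSum
  rw [prod_univ_sum, mul_sum]
  refine sum_congr rfl fun c hc => ?_
  simp only [Fintype.mem_piFinset, mem_withInternals] at hc
  rw [Function.Embedding.coeFn_mk, hookProdS_empty_node, internals_node,
    sum_congr rfl fun i _ => hc i, Nat.mem_antidiagonalTuple.mp hk, add_comm]

theorem map_hookSum {S : Type*} [CommSemiring S] (φ : R →+* S) (m : ℕ) (f : ℕ → R) (n : ℕ) :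
    φ (hookSum m f n) = hookSum m (φ ∘ f) n := by
  simp [hookSum, map_hookProdS]

end HookSum

end MTree

namespace Polynomial

theorem eval_eq_of_eval_add_eq {K : Type*} [CommRing K] [IsDomain K] [CharZero K] {p : K[X]}
    {β : K} (hβ : β ≠ 0) (h : ∀ a, p.eval (a + β) = p.eval a) (a b : K) :
    p.eval a = p.eval b := by
  have hperiodic (n : ℕ) : p.eval (n * β) = p.eval 0 := by
    induction n with
    | zero => simp
    | succ n ih => rw [Nat.cast_succ, add_one_mul, h, ih]
  have hconst : p = C (p.eval 0) := by
    refine eq_of_infinite_eval_eq _ _ (Set.infinite_of_injective_forall_mem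
      (mul_left_injective₀ hβ |>.comp Nat.cast_injective) fun n => ?_)
    simp [hperiodic]
  rw [hconst, eval_C, eval_C]

end Polynomial

section HagenRothe

variable {K : Type*} [Field K]

/-- `hagenRothe z β n` is the polynomial `a ↦ a/n! · ∏_{i=1}^{n-1} (a + n z - i β)`; for `β = 1`
it is Gould's `a/(a + n z) · (a + n z).choose n`. -/
noncomputable def hagenRothe (z β : K) : ℕ → K[X]
  | 0 => 1
  | n + 1 => C ((n + 1).factorial : K)⁻¹ * X * ∏ i ∈ range n, (X + C ((n + 1) * z - (i + 1) * β))

variable (z β : K)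

@[simp]
theorem hagenRothe_zero : hagenRothe z β 0 = 1 := rfl

theorem eval_hagenRothe_succ (a : K) (n : ℕ) :
    (hagenRothe z β (n + 1)).eval a =
      a * (∏ i ∈ range n, (a + (n + 1) * z - (i + 1) * β)) / (n + 1).factorial := by
  simp only [hagenRothe, eval_mul, eval_C, eval_X, eval_prod, eval_add, add_sub_assoc]
  ring

theorem eval_zero_hagenRothe_succ (n : ℕ) : (hagenRothe z β (n + 1)).eval 0 = 0 := by
  simp [eval_hagenRothe_succ]

variable [CharZero K]

theorem eval_add_hagenRothe_succ (a : K) (n : ℕ) :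
    (hagenRothe z β (n + 1)).eval (a + β) =
      (hagenRothe z β (n + 1)).eval a + β * (hagenRothe z β n).eval (a + z) := by
  cases n with
  | zero => simp [eval_hagenRothe_succ]
  | succ n =>
    rw [eval_hagenRothe_succ, eval_hagenRothe_succ, eval_hagenRothe_succ]
    set P := ∏ i ∈ range n, (a + (n + 2) * z - (i + 1) * β)
    have h₁ : ∏ i ∈ range (n + 1), (a + β + ((n + 1 : ℕ) + 1) * z - (i + 1) * β) =
        P * (a + (n + 2) * z) := by
      rw [prod_range_succ']
      congr 1
      · exact prod_congr rfl fun i _ => by push_cast; ring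
      · push_cast; ring
    have h₂ : ∏ i ∈ range (n + 1), (a + ((n + 1 : ℕ) + 1) * z - (i + 1) * β) =
        P * (a + (n + 2) * z - (n + 1) * β) := by
      rw [prod_range_succ]
      congr 1
      · exact prod_congr rfl fun i _ => by push_cast; ring
      · push_cast; ring
    have h₃ : ∏ i ∈ range n, (a + z + (n + 1) * z - (i + 1) * β) = P :=
      prod_congr rfl fun i _ => by ring
    have hn : (n + 1 + 1 : K) ≠ 0 := by exact_mod_cast (n + 1).succ_ne_zero
    have hfac : ((n + 1).factorial : K) ≠ 0 := by exact_mod_cast (n + 1).factorial_ne_zero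
    rw [h₁, h₂, h₃, Nat.factorial_succ (n + 1)]
    push_cast
    field_simp
    ring

theorem sum_antidiagonal_eval_hagenRothe_mul (hβ : β ≠ 0) (n : ℕ) (a b : K) :
    ∑ p ∈ antidiagonal n, (hagenRothe z β p.1).eval a * (hagenRothe z β p.2).eval b =
      (hagenRothe z β n).eval (a + b) := by
  induction n generalizing a b with
  | zero => simp
  | succ n ih =>
    set D : K[X] := ∑ p ∈ antidiagonal (n + 1),
      hagenRothe z β p.1 * C ((hagenRothe z β p.2).eval b) - (hagenRothe z β (n + 1)).comp (X + C b)
    have hD (t : K) : D.eval t = ∑ p ∈ antidiagonal (n + 1),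
        (hagenRothe z β p.1).eval t * (hagenRothe z β p.2).eval b -
          (hagenRothe z β (n + 1)).eval (t + b) := by
      simp [D, eval_finsetSum]
    have hD_add (t : K) : D.eval (t + β) = D.eval t := by
      have hshift : ∑ p ∈ antidiagonal n,
          (hagenRothe z β (p.1 + 1)).eval (t + β) * (hagenRothe z β p.2).eval b =
            ∑ p ∈ antidiagonal n, (hagenRothe z β (p.1 + 1)).eval t * (hagenRothe z β p.2).eval b +
              β * (hagenRothe z β n).eval (t + b + z) := by
        simp only [eval_add_hagenRothe_succ, add_mul, sum_add_distrib, mul_assoc, ← mul_sum, ih,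
          add_right_comm t z b]
      rw [hD, hD, Nat.sum_antidiagonal_succ, Nat.sum_antidiagonal_succ, hshift,
        add_right_comm t β b, eval_add_hagenRothe_succ, hagenRothe_zero, eval_one, eval_one]
      ring
    have hD_zero : D.eval 0 = 0 := by
      simp [hD, Nat.sum_antidiagonal_succ, eval_zero_hagenRothe_succ]
    rw [← sub_eq_zero, ← hD, eval_eq_of_eval_add_eq hβ hD_add a 0, hD_zero]

theorem sum_piAntidiag_prod_eval_hagenRothe (hβ : β ≠ 0) {ι : Type*} [DecidableEq ι]
    (s : Finset ι) (a : ι → K) (n : ℕ) :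
    ∑ k ∈ piAntidiag s n, ∏ i ∈ s, (hagenRothe z β (k i)).eval (a i) =
      (hagenRothe z β n).eval (∑ i ∈ s, a i) := by
  induction s using Finset.cons_induction generalizing n with
  | empty => cases n <;> simp [eval_zero_hagenRothe_succ]
  | cons j s hj ih =>
    rw [piAntidiag_cons, sum_disjiUnion, sum_cons, ← sum_antidiagonal_eval_hagenRothe_mul z β hβ]
    refine sum_congr rfl fun p _ => ?_
    rw [sum_map, ← ih, mul_sum]
    refine sum_congr rfl fun k hk => ?_
    have hkj : k j = 0 := not_imp_comm.mp ((mem_piAntidiag.mp hk).2 j) hj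
    rw [prod_cons]
    congr 1
    · simp [hkj]
    · refine prod_congr rfl fun i hi => ?_
      simp [ne_of_mem_of_not_mem hi hj]

end HagenRothe

section DuLiu

variable {K : Type*} [Field K] [CharZero K]

theorem eval_hagenRothe_succ_eq_mul (m : ℕ) (x : K) (s : ℕ) :
    (hagenRothe (m * (x + 1)) (m - x) (s + 1)).eval (x + 1) =
      (x + ((s + 1 : ℕ) : K)⁻¹) *
        (hagenRothe (m * (x + 1)) (m - x) s).eval ((m + 1) * (x + 1)) := by
  cases s with
  | zero => simp [eval_hagenRothe_succ]
  | succ s =>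
    rw [eval_hagenRothe_succ, eval_hagenRothe_succ, prod_range_succ]
    have hprod : ∏ i ∈ range s, ((m + 1) * (x + 1) + (s + 1) * (m * (x + 1)) - (i + 1) * (m - x)) =
        ∏ i ∈ range s, (x + 1 + ((s + 1 : ℕ) + 1) * (m * (x + 1)) - (i + 1) * (m - x)) :=
      prod_congr rfl fun i _ => by push_cast; ring
    have hs : (s + 1 + 1 : K) ≠ 0 := by exact_mod_cast (s + 1).succ_ne_zero
    have hfac : ((s + 1).factorial : K) ≠ 0 := by exact_mod_cast (s + 1).factorial_ne_zero
    rw [hprod, Nat.factorial_succ (s + 1)]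
    generalize ∏ i ∈ range s, (x + 1 + ((s + 1 : ℕ) + 1) * (m * (x + 1)) - (i + 1) * (m - x)) = P
    push_cast
    field_simp
    ring

theorem hookSum_eq_eval_hagenRothe (m : ℕ) {x : K} (hx : x ≠ m) (n : ℕ) :
    MTree.hookSum m (fun h => x + (h : K)⁻¹) n =
      (hagenRothe (m * (x + 1)) (m - x) n).eval (x + 1) := by
  induction n using Nat.strong_induction_on with
  | _ n ih =>
    cases n with
    | zero => simp [MTree.hookSum_zero]
    | succ s =>
      have hchild (k : Fin (m + 1) → ℕ) (hk : k ∈ Nat.antidiagonalTuple (m + 1) s)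
          (i : Fin (m + 1)) : k i < s + 1 :=
        Nat.lt_succ_of_le <| (Nat.mem_antidiagonalTuple.mp hk) ▸
          single_le_sum (f := k) (fun _ _ => Nat.zero_le _) (mem_univ i)
      have hβ : (m - x : K) ≠ 0 := sub_ne_zero.mpr hx.symm
      rw [MTree.hookSum_succ, eval_hagenRothe_succ_eq_mul,
        sum_congr rfl fun k hk => prod_congr rfl fun i _ => ih (k i) (hchild k hk i),
        ← piAntidiag_univ_fin_eq_antidiagonalTuple, sum_piAntidiag_prod_eval_hagenRothe _ _ hβ,
        sum_const, card_univ, Fintype.card_fin, nsmul_eq_mul, Nat.cast_add_one m]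

theorem eval_duLiu_closedForm (m n : ℕ) (hn : 1 ≤ n) (x : K) :
    (C ((n.factorial : K)⁻¹) * ((X : K[X]) + 1) *
        ∏ i ∈ Icc 1 (n - 1),
          (C ((m : K) * n + (i : K) + 1) * ((X : K[X]) + 1) - C (((m : K) + 1) * (i : K)))).eval x =
      (hagenRothe (m * (x + 1)) (m - x) n).eval (x + 1) := by
  obtain ⟨k, rfl⟩ := Nat.exists_eq_add_of_le' hn
  rw [eval_hagenRothe_succ, Nat.add_sub_cancel, ← Ico_add_one_right_eq_Icc,
    prod_Ico_eq_prod_range, Nat.add_sub_cancel]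
  simp only [eval_mul, eval_C, eval_add, eval_X, eval_one, eval_prod, eval_sub]
  rw [prod_congr rfl fun i _ => ?_]
  · ring
  · push_cast; ring

end DuLiu

theorem du_liu_hook_length_formula_general (m n : ℕ) (hn : 1 ≤ n) :
    (∑ᶠ T ∈ {T : MTree (m + 1) | T.internals = n},
        MTree.hookProdS (∅ : Finset (Fin m))
          (fun h => (X : ℚ[X]) + C ((h : ℚ)⁻¹)) T)
      = C ((n.factorial : ℚ)⁻¹) * ((X : ℚ[X]) + 1) *
          ∏ i ∈ Finset.Icc 1 (n - 1),
            (C ((m : ℚ) * n + (i : ℚ) + 1) * ((X : ℚ[X]) + 1) -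
              C (((m : ℚ) + 1) * (i : ℚ))) := by
  rw [← MTree.coe_withInternals, finsum_mem_coe_finset, ← MTree.hookSum]
  refine eq_of_infinite_eval_eq _ _ ((Set.finite_singleton (m : ℚ)).infinite_compl.mono
    fun x (hx : x ≠ m) => ?_)
  rw [Set.mem_ofPred_eq, eval_duLiu_closedForm m n hn, ← hookSum_eq_eval_hagenRothe m hx,
    ← coe_evalRingHom, MTree.map_hookSum]
  congr 1
  ext h
  simp

/-- **Du–Liu hook length formula for `(m+1)`-ary trees, first form.**
For `m ≥ 1` and `n ≥ 1`,
`∑_{T ∈ 𝒯_{n,m+1}} ∏_{v} (x + 1/h_v)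
  = ((x+1)/n!) ∏_{i=1}^{n-1} ((mn+i+1)(x+1) - (m+1)i)` in `ℚ[x]`, where `h_v` is
the number of internal vertices of the subtree rooted at `v` (this is the case
`S = ∅` of the second kind of hook length). -/
theorem du_liu_hook_length_formula (m n : ℕ) (hm : 1 ≤ m) (hn : 1 ≤ n) :
    (∑ᶠ T ∈ {T : MTree (m + 1) | T.internals = n},
        MTree.hookProdS (∅ : Finset (Fin m))
          (fun h => (X : ℚ[X]) + C ((h : ℚ)⁻¹)) T)
      = C ((n.factorial : ℚ)⁻¹) * ((X : ℚ[X]) + 1) *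
          ∏ i ∈ Finset.Icc 1 (n - 1),
            (C ((m : ℚ) * n + (i : ℚ) + 1) * ((X : ℚ[X]) + 1) -
              C (((m : ℚ) + 1) * (i : ℚ))) :=
  du_liu_hook_length_formula_general m n hn
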